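/- arXiv:2202.00708 — 4 statements merged into one kernel-verified Lean document; each statement's English description precedes it below -/
import Mathlib

section
/- Let α be a composition of n. The operators π_i^{RS*} on SIT(α) ∪ {0} satisfy the 0-Hecke algebra relations: (π_i^{RS*})∘(π_i^{RS*}) = π_i^{RS*} for all 1 ≤ i ≤ n−1; π_i^{RS*}∘π_j^{RS*} = π_j^{RS*}∘π_i^{RS*} whenever |i−j| ≥ 2; and π_i^{RS*}∘π_{i+1}^{RS*}∘π_i^{RS*} = π_{i+1}^{RS*}∘π_i^{RS*}∘π_{i+1}^{RS*} for all 1 ≤ i ≤ n−2. -/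
open Classical

namespace ImmHecke

/-- A filling assigns a natural-number entry to each cell `(row, column)` (0-indexed);
row `0` is the bottom row.  Cells outside the diagram carry the junk value `0`. -/
abbrev Filling : Type := ℕ × ℕ → ℕ

/-- `c` is a cell of the diagram of the composition `α` (0-indexed rows and columns;
row `i` has `α_i` cells). -/
def IsCell (α : List ℕ) (c : ℕ × ℕ) : Prop :=
  c.1 < α.length ∧ c.2 < α.getD c.1 0

/-- `α` is a composition of `n`: a list of positive integers summing to `n`. -/
def IsComposition (α : List ℕ) (n : ℕ) : Prop :=
  (∀ a ∈ α, 0 < a) ∧ α.sum = n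

/-- `T` is a bijective filling of the diagram of `α` with the entries `1, …, n`
(where `n = α.sum`), and with value `0` off the diagram. -/
def IsStdFilling (α : List ℕ) (T : Filling) : Prop :=
  (∀ c, ¬ IsCell α c → T c = 0) ∧
  (∀ c, IsCell α c → 1 ≤ T c ∧ T c ≤ α.sum) ∧
  (∀ c c', IsCell α c → IsCell α c' → T c = T c' → c = c') ∧
  (∀ m, 1 ≤ m → m ≤ α.sum → ∃ c, IsCell α c ∧ T c = m)

/-- A standard immaculate tableau of shape `α`: a bijective standard filling whose
first-column entries strictly increase bottom to top and whose rows strictly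
increase left to right. -/
def IsSIT (α : List ℕ) (T : Filling) : Prop :=
  IsStdFilling α T ∧
  (∀ i i' : ℕ, IsCell α (i, 0) → IsCell α (i', 0) → i < i' → T (i, 0) < T (i', 0)) ∧
  (∀ i j j' : ℕ, IsCell α (i, j) → IsCell α (i, j') → j < j' → T (i, j) < T (i, j'))

/-- A standard extended tableau of shape `α`: a bijective standard filling whose rows
strictly increase left to right and all of whose columns strictly increase
bottom to top.  Note `SET(α) ⊆ SIT(α)`. -/
def IsSET (α : List ℕ) (T : Filling) : Prop :=
  IsStdFilling α T ∧
  (∀ i j j' : ℕ, IsCell α (i, j) → IsCell α (i, j') → j < j' → T (i, j) < T (i, j')) ∧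
  (∀ i i' j : ℕ, IsCell α (i, j) → IsCell α (i', j) → i < i' → T (i, j) < T (i', j))

/-- `SIT*(α)`: standard immaculate tableaux whose first column contains exactly the
entries `1, 2, …, ℓ(α)`. -/
def IsSITstar (α : List ℕ) (T : Filling) : Prop :=
  IsSIT α T ∧
  (∀ i, IsCell α (i, 0) → 1 ≤ T (i, 0) ∧ T (i, 0) ≤ α.length) ∧
  (∀ m, 1 ≤ m → m ≤ α.length → ∃ i, IsCell α (i, 0) ∧ T (i, 0) = m)

/-- In `T`, the entry `m+1` lies in a row strictly above the row of `m`. -/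
def SuccAbove (α : List ℕ) (T : Filling) (m : ℕ) : Prop :=
  ∃ c c', IsCell α c ∧ IsCell α c' ∧ T c = m ∧ T c' = m + 1 ∧ c.1 < c'.1

/-- In `T`, the entries `m` and `m+1` lie in the same row. -/
def SuccSameRow (α : List ℕ) (T : Filling) (m : ℕ) : Prop :=
  ∃ c c', IsCell α c ∧ IsCell α c' ∧ T c = m ∧ T c' = m + 1 ∧ c.1 = c'.1

/-- In `T`, the entry `m+1` lies in a row strictly below the row of `m`. -/
def SuccBelow (α : List ℕ) (T : Filling) (m : ℕ) : Prop :=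
  ∃ c c', IsCell α c ∧ IsCell α c' ∧ T c = m ∧ T c' = m + 1 ∧ c'.1 < c.1

/-- In `T`, the entries `m` and `m+1` are both in the first column. -/
def BothFirstColumn (α : List ℕ) (T : Filling) (m : ℕ) : Prop :=
  ∃ c c', IsCell α c ∧ IsCell α c' ∧ T c = m ∧ T c' = m + 1 ∧ c.2 = 0 ∧ c'.2 = 0

/-- `s_i(T)`: exchange the entries `i` and `i+1` of `T`. -/
def swapEntries (i : ℕ) (T : Filling) : Filling :=
  fun c => if T c = i then i + 1 else if T c = i + 1 then i else T c

/-- The row-strict dual immaculate 0-Hecke operator `π_i^{RS*}` on `SIT(α) ∪ {0}`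
(`0` is encoded as `none`): `π_i(T) = T` if `i+1` is strictly above `i`;
`π_i(T) = 0` if `i` and `i+1` are in the same row; `π_i(T) = s_i(T)` if `i+1` is
strictly below `i`. -/
noncomputable def piRS (α : List ℕ) (i : ℕ) : Option Filling → Option Filling
  | none => none
  | some T =>
    if SuccAbove α T i then some T
    else if SuccSameRow α T i then none
    else some (swapEntries i T)

/-- The dual immaculate 0-Hecke operator `π_i^{S*}` on `SIT(α) ∪ {0}`:
`π_i(T) = T` if `i+1` is in a row weakly below `i`; `π_i(T) = 0` if `i` and `i+1`
are both in the first column; `π_i(T) = s_i(T)` if `i+1` is strictly above `i`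
and `i, i+1` are not both in the first column. -/
noncomputable def piS (α : List ℕ) (i : ℕ) : Option Filling → Option Filling
  | none => none
  | some T =>
    if SuccSameRow α T i ∨ SuccBelow α T i then some T
    else if BothFirstColumn α T i then none
    else some (swapEntries i T)

/-- The 0-Hecke operator `π_i^{A*}` on `SIT(α)`: `π_i(T) = T` if `i+1` is strictly
above `i` or in the same row as `i`; `π_i(T) = s_i(T)` if `i+1` is strictly below `i`. -/
noncomputable def piA (α : List ℕ) (i : ℕ) (T : Filling) : Filling :=
  if SuccBelow α T i then swapEntries i T else T

/-- The 0-Hecke operator `π_i^{Ā*}` on `SIT(α) ∪ {0}`: `π_i(T) = T` if `i+1` is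
strictly below `i`; `π_i(T) = 0` if `i` and `i+1` are in the same row or both in
the first column; `π_i(T) = s_i(T)` if `i+1` is strictly above `i` and `i, i+1`
are not both in the first column. -/
noncomputable def piAbar (α : List ℕ) (i : ℕ) : Option Filling → Option Filling
  | none => none
  | some T =>
    if SuccBelow α T i then some T
    else if SuccSameRow α T i ∨ BothFirstColumn α T i then none
    else some (swapEntries i T)

/-- `x` belongs to `SIT(α) ∪ {0}` (with `0 = none`). -/
def InSITZ (α : List ℕ) (x : Option Filling) : Prop :=
  ∀ T, x = some T → IsSIT α T

/-- Successively apply the operators `π_{i_1}^{RS*}, …, π_{i_r}^{RS*}` (the list `l = [i_1, …, i_r]`). -/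
noncomputable def applySeqRS (α : List ℕ) (l : List ℕ) (x : Option Filling) : Option Filling :=
  l.foldl (fun y i => piRS α i y) x

/-- Successively apply the operators `π_{i_1}^{S*}, …, π_{i_r}^{S*}`. -/
noncomputable def applySeqS (α : List ℕ) (l : List ℕ) (x : Option Filling) : Option Filling :=
  l.foldl (fun y i => piS α i y) x

/-- The relation `T₁ ≼ T₂` on `SIT(α)`: some sequence of operators `π_i^{RS*}`
(indices in `{1, …, n-1}`, possibly empty) sends `T₁` to `T₂`. -/
def preRS (α : List ℕ) (T₁ T₂ : Filling) : Prop :=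
  ∃ l : List ℕ, (∀ i ∈ l, 1 ≤ i ∧ i ≤ α.sum - 1) ∧ applySeqRS α l (some T₁) = some T₂

/-- The one-line notation of `σ(T)`: read the entries of `T` from right to left in
each row, rows from top to bottom. -/
def readingWord (α : List ℕ) (T : Filling) : List ℕ :=
  ((List.range α.length).reverse).flatMap
    (fun i => ((List.range (α.getD i 0)).map fun j => T (i, j)).reverse)

/-- The number of inversions of a word `w`: pairs of positions `p < q` with `w p > w q`. -/
def inversions (w : List ℕ) : ℕ :=
  ((Finset.range w.length ×ˢ Finset.range w.length).filter
    (fun pq : ℕ × ℕ => pq.1 < pq.2 ∧ w.getD pq.2 0 < w.getD pq.1 0)).card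

/-- `S⁰_α`: first column contains `1, …, ℓ` bottom to top; the remaining cells are
filled with `ℓ+1, …, n` consecutively, reading rows from top to bottom and left to
right within each row. -/
noncomputable def S0 (α : List ℕ) : Filling := fun c =>
  if IsCell α c then
    if c.2 = 0 then c.1 + 1
    else
      α.length + (((List.range α.length).filter fun r => c.1 < r).map fun r => α.getD r 0 - 1).sum + c.2
  else 0

/-- `S^{row}_α`: the row superstandard tableau, entries `1, …, n` placed consecutively
reading rows bottom to top, left to right within each row. -/
noncomputable def Srow (α : List ℕ) : Filling := fun c =>
  if IsCell α c then (α.take c.1).sum + c.2 + 1 else 0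

/-- `S^{row*}_α`: first column contains `1, …, ℓ` bottom to top; the remaining cells
are filled with `ℓ+1, …, n` consecutively, reading rows bottom to top, left to right
within each row. -/
noncomputable def SrowStar (α : List ℕ) : Filling := fun c =>
  if IsCell α c then
    if c.2 = 0 then c.1 + 1
    else α.length + ((List.range c.1).map fun r => α.getD r 0 - 1).sum + c.2
  else 0

/-- `S^{col}_α`: the column superstandard tableau, entries `1, …, n` placed
consecutively reading columns bottom to top, columns left to right. -/
noncomputable def Scol (α : List ℕ) : Filling := fun c =>
  if IsCell α c then
    ((List.range c.2).map fun j' =>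
        ((List.range α.length).filter fun r => j' < α.getD r 0).length).sum
      + ((List.range c.1).filter fun r => c.2 < α.getD r 0).length + 1
  else 0

/-- The image of a basis element of `V_α` under the linearly extended operator
`π_i^{RS*}` (the value `0` of the operator is interpreted as the zero vector). -/
noncomputable def piTargetRS (α : List ℕ) (i : ℕ) (T : {T : Filling // IsSIT α T}) :
    ({T : Filling // IsSIT α T} →₀ ℚ) :=
  match piRS α i (some T.val) with
  | none => 0
  | some T' => if h : IsSIT α T' then Finsupp.single ⟨T', h⟩ 1 else 0

/-- The operator `π_i^{RS*}` extended to a `ℚ`-linear endomorphism of the free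
`ℚ`-vector space `V_α` with basis `SIT(α)`. -/
noncomputable def piRSLin (α : List ℕ) (i : ℕ) :
    ({T : Filling // IsSIT α T} →₀ ℚ) →ₗ[ℚ] ({T : Filling // IsSIT α T} →₀ ℚ) :=
  Finsupp.lsum ℚ fun T => LinearMap.toSpanSingleton ℚ _ (piTargetRS α i T)

/-- The image of a basis element of `Z_α` under the linearly extended operator
`π_i^{RS*}`. -/
noncomputable def piTargetSET (α : List ℕ) (i : ℕ) (T : {T : Filling // IsSET α T}) :
    ({T : Filling // IsSET α T} →₀ ℚ) :=
  match piRS α i (some T.val) with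
  | none => 0
  | some T' => if h : IsSET α T' then Finsupp.single ⟨T', h⟩ 1 else 0

/-- The operator `π_i^{RS*}` extended to a `ℚ`-linear endomorphism of the free
`ℚ`-vector space `Z_α` with basis `SET(α)`. -/
noncomputable def piRSLinSET (α : List ℕ) (i : ℕ) :
    ({T : Filling // IsSET α T} →₀ ℚ) →ₗ[ℚ] ({T : Filling // IsSET α T} →₀ ℚ) :=
  Finsupp.lsum ℚ fun T => LinearMap.toSpanSingleton ℚ _ (piTargetSET α i T)

/-!
`π_i^{RS*}` only looks at the rows `r(i)`, `r(i+1)` of the entries `i`, `i+1`: it fixes `T`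
if `r(i) < r(i+1)`, kills it if they are equal, and otherwise applies `s_i`, which exchanges
the two rows. So the operators act on the row word `r` like bubble-sort steps, and each
relation reduces to comparing the rows of at most four entries, together with the Coxeter
relations of the transpositions `s_i` in the cases where both sides swap.
-/

section HeckeOp

variable {X : Type*} (row : X → ℕ → ℕ) (s : ℕ → X → X)

/-- `π_m^{RS*}` abstracted: `row x k` stands for the row of the entry `k` of `x`, and `s m` for
the exchange of the entries `m` and `m + 1`. -/
noncomputable def heckeOp (m : ℕ) : Option X → Option X
  | none => none
  | some x =>
    if row x m < row x (m + 1) then some x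
    else if row x m = row x (m + 1) then none
    else some (s m x)

variable {row s}

@[simp]
theorem heckeOp_none (m : ℕ) : heckeOp row s m none = none := rfl

theorem heckeOp_some (m : ℕ) (x : X) : heckeOp row s m (some x) =
    if row x m < row x (m + 1) then some x
    else if row x m = row x (m + 1) then none
    else some (s m x) := rfl

theorem heckeOp_preserves {P : X → Prop} {m : ℕ} (hP : ∀ x, P x → P (s m x)) {x : Option X}
    (hx : ∀ y, x = some y → P y) : ∀ y, heckeOp row s m x = some y → P y := by
  rcases x with _ | x
  · simp
  have hPx := hx x rfl
  simp only [heckeOp_some]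
  split_ifs <;> simp [hPx, hP x hPx]

variable (hrow : ∀ m x k, row (s m x) k = row x (Equiv.swap m (m + 1) k))
include hrow

theorem heckeOp_idem (m : ℕ) (x : Option X) :
    heckeOp row s m (heckeOp row s m x) = heckeOp row s m x := by
  rcases x with _ | x
  · rfl
  simp only [heckeOp_some, hrow, apply_ite (heckeOp row s m), heckeOp_none,
    Equiv.swap_apply_left, Equiv.swap_apply_right]
  split_ifs <;> first | rfl | omega

theorem heckeOp_comm {i j : ℕ} (hij : i + 2 ≤ j) (hs : ∀ x, s i (s j x) = s j (s i x))
    (x : Option X) :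
    heckeOp row s i (heckeOp row s j x) = heckeOp row s j (heckeOp row s i x) := by
  rcases x with _ | x
  · rfl
  have hj : Equiv.swap j (j + 1) i = i := Equiv.swap_apply_of_ne_of_ne (by omega) (by omega)
  have hj' : Equiv.swap j (j + 1) (i + 1) = i + 1 :=
    Equiv.swap_apply_of_ne_of_ne (by omega) (by omega)
  have hi : Equiv.swap i (i + 1) j = j := Equiv.swap_apply_of_ne_of_ne (by omega) (by omega)
  have hi' : Equiv.swap i (i + 1) (j + 1) = j + 1 :=
    Equiv.swap_apply_of_ne_of_ne (by omega) (by omega)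
  simp only [heckeOp_some, hrow, apply_ite (heckeOp row s i), apply_ite (heckeOp row s j),
    heckeOp_none, hi, hi', hj, hj']
  split_ifs <;> first | rfl | omega | exact congrArg some (hs x)

theorem heckeOp_braid (i : ℕ)
    (hs : ∀ x, s i (s (i + 1) (s i x)) = s (i + 1) (s i (s (i + 1) x))) (x : Option X) :
    heckeOp row s i (heckeOp row s (i + 1) (heckeOp row s i x)) =
      heckeOp row s (i + 1) (heckeOp row s i (heckeOp row s (i + 1) x)) := by
  rcases x with _ | x
  · rfl
  have h1 : Equiv.swap i (i + 1) (i + 1 + 1) = i + 1 + 1 :=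
    Equiv.swap_apply_of_ne_of_ne (by omega) (by omega)
  have h2 : Equiv.swap (i + 1) (i + 1 + 1) i = i :=
    Equiv.swap_apply_of_ne_of_ne (by omega) (by omega)
  simp only [heckeOp_some, hrow, apply_ite (heckeOp row s i), apply_ite (heckeOp row s (i + 1)),
    heckeOp_none, h1, h2, Equiv.swap_apply_left, Equiv.swap_apply_right]
  split_ifs <;> first | rfl | omega | exact congrArg some (hs x)

end HeckeOp

theorem swapEntries_apply (m : ℕ) (T : Filling) (c : ℕ × ℕ) :
    swapEntries m T c = Equiv.swap m (m + 1) (T c) := by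
  simp only [swapEntries, Equiv.swap_apply_def]

theorem swapEntries_comm {i j : ℕ} (hij : i + 2 ≤ j) (T : Filling) :
    swapEntries i (swapEntries j T) = swapEntries j (swapEntries i T) := by
  funext c
  simp only [swapEntries_apply, Equiv.swap_apply_def]
  split_ifs <;> omega

theorem swapEntries_braid (i : ℕ) (T : Filling) :
    swapEntries i (swapEntries (i + 1) (swapEntries i T)) =
      swapEntries (i + 1) (swapEntries i (swapEntries (i + 1) T)) := by
  funext c
  simp only [swapEntries_apply, Equiv.swap_apply_def]
  split_ifs <;> omega

theorem isStdFilling_swapEntries {α : List ℕ} {T : Filling} (hT : IsStdFilling α T) {m : ℕ}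
    (hm : 1 ≤ m) (hm' : m + 1 ≤ α.sum) : IsStdFilling α (swapEntries m T) := by
  obtain ⟨hzero, hrange, hinj, hsurj⟩ := hT
  have hswap : ∀ k, 1 ≤ k → k ≤ α.sum → 1 ≤ Equiv.swap m (m + 1) k ∧
      Equiv.swap m (m + 1) k ≤ α.sum := by
    intro k
    rw [Equiv.swap_apply_def]
    split_ifs <;> omega
  refine ⟨fun c hc => ?_, fun c hc => ?_, fun c c' hc hc' h => ?_, fun k hk hk' => ?_⟩
  · rw [swapEntries_apply, hzero c hc]
    exact Equiv.swap_apply_of_ne_of_ne (by omega) (by omega)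
  · rw [swapEntries_apply]
    exact hswap _ (hrange c hc).1 (hrange c hc).2
  · rw [swapEntries_apply, swapEntries_apply] at h
    exact hinj c c' hc hc' ((Equiv.swap m (m + 1)).injective h)
  · obtain ⟨c, hc, hv⟩ := hsurj _ (hswap k hk hk').1 (hswap k hk hk').2
    exact ⟨c, hc, by rw [swapEntries_apply, hv, Equiv.swap_apply_self]⟩

noncomputable def entryRow (α : List ℕ) (T : Filling) (k : ℕ) : ℕ :=
  if h : ∃ c, IsCell α c ∧ T c = k then (Classical.choose h).1 else 0

theorem entryRow_swapEntries (α : List ℕ) (m : ℕ) (T : Filling) (k : ℕ) :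
    entryRow α (swapEntries m T) k = entryRow α T (Equiv.swap m (m + 1) k) := by
  simp only [entryRow, swapEntries_apply, Equiv.swap_apply_eq_iff]

theorem entryRow_apply {α : List ℕ} {T : Filling}
    (hinj : ∀ c c', IsCell α c → IsCell α c' → T c = T c' → c = c') {c : ℕ × ℕ}
    (hc : IsCell α c) : entryRow α T (T c) = c.1 := by
  have h : ∃ d, IsCell α d ∧ T d = T c := ⟨c, hc, rfl⟩
  obtain ⟨hd, hdc⟩ := Classical.choose_spec h
  rw [entryRow, dif_pos h, hinj _ _ hd hc hdc]

theorem exists_cells_iff_entryRow {α : List ℕ} {T : Filling} (hT : IsStdFilling α T) {m : ℕ}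
    (hm : 1 ≤ m) (hm' : m + 1 ≤ α.sum) (R : ℕ → ℕ → Prop) :
    (∃ c c', IsCell α c ∧ IsCell α c' ∧ T c = m ∧ T c' = m + 1 ∧ R c.1 c'.1) ↔
      R (entryRow α T m) (entryRow α T (m + 1)) := by
  obtain ⟨-, -, hinj, hsurj⟩ := hT
  constructor
  · rintro ⟨c, c', hc, hc', rfl, hv', hR⟩
    rwa [← hv', entryRow_apply hinj hc, entryRow_apply hinj hc']
  · intro hR
    obtain ⟨c, hc, rfl⟩ := hsurj m hm (by omega)
    obtain ⟨c', hc', hv'⟩ := hsurj (T c + 1) (by omega) hm'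
    rw [← hv', entryRow_apply hinj hc, entryRow_apply hinj hc'] at hR
    exact ⟨c, c', hc, hc', rfl, hv', hR⟩

theorem piRS_some_eq_heckeOp {α : List ℕ} {T : Filling} (hT : IsStdFilling α T) {m : ℕ}
    (hm : 1 ≤ m) (hm' : m + 1 ≤ α.sum) :
    piRS α m (some T) = heckeOp (entryRow α) swapEntries m (some T) := by
  have hAbove : SuccAbove α T m ↔ _ := exists_cells_iff_entryRow hT hm hm' (· < ·)
  have hSame : SuccSameRow α T m ↔ _ := exists_cells_iff_entryRow hT hm hm' (· = ·)
  simp only [piRS, hAbove, hSame, heckeOp_some]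

theorem applySeqRS_eq_foldl_heckeOp {α l : List ℕ}
    (hl : l.Forall fun m => 1 ≤ m ∧ m + 1 ≤ α.sum) {x : Option Filling}
    (hx : ∀ T, x = some T → IsStdFilling α T) :
    applySeqRS α l x = l.foldl (fun y m => heckeOp (entryRow α) swapEntries m y) x := by
  induction l generalizing x with
  | nil => rfl
  | cons m l ih =>
    obtain ⟨⟨hm, hm'⟩, hl⟩ := (List.forall_cons _ m l).mp hl
    have hstep : piRS α m x = heckeOp (entryRow α) swapEntries m x := by
      rcases x with _ | T
      · rfl
      · exact piRS_some_eq_heckeOp (hx T rfl) hm hm'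
    have hstd := heckeOp_preserves (row := entryRow α) (P := IsStdFilling α)
      (fun T hT => isStdFilling_swapEntries hT hm hm') hx
    exact (congrArg (applySeqRS α l) hstep).trans (ih hl hstd)

theorem piRS_hecke_relations (n : ℕ) (α : List ℕ) (hα : IsComposition α n) :
    (∀ i, 1 ≤ i → i ≤ n - 1 →
      ∀ x : Option Filling, InSITZ α x → piRS α i (piRS α i x) = piRS α i x) ∧
    (∀ i j, 1 ≤ i → i ≤ n - 1 → 1 ≤ j → j ≤ n - 1 → (i + 2 ≤ j ∨ j + 2 ≤ i) →
      ∀ x : Option Filling, InSITZ α x →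
        piRS α i (piRS α j x) = piRS α j (piRS α i x)) ∧
    (∀ i, 1 ≤ i → i + 1 ≤ n - 1 →
      ∀ x : Option Filling, InSITZ α x →
        piRS α i (piRS α (i + 1) (piRS α i x)) =
          piRS α (i + 1) (piRS α i (piRS α (i + 1) x))) := by
  obtain ⟨-, rfl⟩ := hα
  have hrow := entryRow_swapEntries α
  have hfold : ∀ l x, InSITZ α x → (l.Forall fun m => 1 ≤ m ∧ m + 1 ≤ α.sum) →
      applySeqRS α l x = l.foldl (fun y m => heckeOp (entryRow α) swapEntries m y) x :=
    fun l x hx hl => applySeqRS_eq_foldl_heckeOp hl fun T hT => (hx T hT).1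
  refine ⟨fun i hi hi' x hx => ?_, fun i j hi hi' hj hj' hij x hx => ?_,
    fun i hi hi' x hx => ?_⟩
  · change applySeqRS α [i, i] x = applySeqRS α [i] x
    rw [hfold _ x hx (by simp only [List.Forall]; omega),
      hfold _ x hx (by simp only [List.Forall]; omega)]
    exact heckeOp_idem hrow i x
  · change applySeqRS α [j, i] x = applySeqRS α [i, j] x
    rw [hfold _ x hx (by simp only [List.Forall]; omega),
      hfold _ x hx (by simp only [List.Forall]; omega)]
    rcases hij with hij | hij
    · exact heckeOp_comm hrow hij (swapEntries_comm hij) x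
    · exact (heckeOp_comm hrow hij (swapEntries_comm hij) x).symm
  · change applySeqRS α [i, i + 1, i] x = applySeqRS α [i + 1, i, i + 1] x
    rw [hfold _ x hx (by simp only [List.Forall]; omega),
      hfold _ x hx (by simp only [List.Forall]; omega)]
    exact heckeOp_braid hrow i (swapEntries_braid i) x

end ImmHecke
end

section
/- Let α be a composition of n and T_1, T_2 ∈ SIT(α). If π_i^{RS*}(T_1) = T_2 for some 1 ≤ i ≤ n−1 and T_1 ≠ T_2, then inv(σ(T_2)) = inv(σ(T_1)) + 1. -/
open Classical

namespace ImmHecke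

/-! If `π_i^{RS*}` moves `T`, then `i + 1` lies in a lower row than `i` and `π_i^{RS*}(T) = s_i(T)`.
Since rows are read from top to bottom, `i` precedes `i + 1` in the reading word of `T`, and the
reading word of `s_i(T)` is obtained by exchanging the values `i` and `i + 1`. Such an exchange
of adjacent values appearing in increasing order creates exactly one inversion and leaves every
other comparison unchanged. -/

lemma swap_succ_lt_swap_succ_iff {a x y : ℕ} (h : ¬(x = a ∧ y = a + 1)) (h' : ¬(x = a + 1 ∧ y = a)) :
    Equiv.swap a (a + 1) x < Equiv.swap a (a + 1) y ↔ x < y := by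
  rw [Equiv.swap_apply_def, Equiv.swap_apply_def]
  split_ifs <;> omega

lemma exists_lt_getD_of_pair_sublist {α : Type*} {x y d : α} {w : List α}
    (h : [x, y].Sublist w) :
    ∃ p q, p < q ∧ q < w.length ∧ w.getD p d = x ∧ w.getD q d = y := by
  obtain ⟨f, hf⟩ := List.sublist_iff_exists_fin_orderEmbedding_get_eq.mp h
  refine ⟨f 0, f 1, f.strictMono Fin.zero_lt_one, (f 1).isLt, ?_, ?_⟩
  · rw [List.getD_eq_getElem _ _ (f 0).isLt]; exact (hf 0).symm
  · rw [List.getD_eq_getElem _ _ (f 1).isLt]; exact (hf 1).symm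

lemma inversions_map_swap_succ {w : List ℕ} (hw : w.Nodup) {a : ℕ} (h : [a, a + 1].Sublist w) :
    inversions (w.map (Equiv.swap a (a + 1))) = inversions w + 1 := by
  obtain ⟨p, q, hpq, hq, hwp, hwq⟩ := exists_lt_getD_of_pair_sublist (d := 0) h
  have hp : p < w.length := hpq.trans hq
  have hinj : ∀ r s, r < w.length → s < w.length → w.getD r 0 = w.getD s 0 → r = s := by
    intro r s hr hs hrs
    rwa [List.getD_eq_getElem _ _ hr, List.getD_eq_getElem _ _ hs, hw.getElem_inj_iff] at hrs
  have hmap : ∀ r < w.length, (w.map (Equiv.swap a (a + 1))).getD r 0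
      = Equiv.swap a (a + 1) (w.getD r 0) := fun r hr => by
    rw [List.getD_eq_getElem _ _ (by simpa using hr), List.getD_eq_getElem _ _ hr,
      List.getElem_map]
  have hcmp : ∀ r s, r < w.length → s < w.length → r < s → ¬(r = p ∧ s = q) →
      (Equiv.swap a (a + 1) (w.getD s 0) < Equiv.swap a (a + 1) (w.getD r 0) ↔
        w.getD s 0 < w.getD r 0) := by
    intro r s hr hs hrs hne
    refine swap_succ_lt_swap_succ_iff ?_ ?_
    · rintro ⟨hsa, hra⟩
      have := hinj s p hs hp (hsa.trans hwp.symm)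
      have := hinj r q hr hq (hra.trans hwq.symm)
      omega
    · rintro ⟨hsa, hra⟩
      exact hne ⟨hinj r p hr hp (hra.trans hwp.symm), hinj s q hs hq (hsa.trans hwq.symm)⟩
  unfold inversions
  rw [List.length_map, ← Finset.card_insert_of_notMem (a := (p, q))
    (by simp only [Finset.mem_filter, hwp, hwq]; omega)]
  congr 1
  ext ⟨r, s⟩
  simp only [Finset.mem_insert, Finset.mem_filter, Finset.mem_product, Finset.mem_range,
    Prod.mk.injEq]
  by_cases hrs : r = p ∧ s = q
  · obtain ⟨rfl, rfl⟩ := hrs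
    simp only [hmap _ hp, hmap _ hq, hwp, hwq, Equiv.swap_apply_left, Equiv.swap_apply_right]
    exact iff_of_true ⟨⟨hp, hq⟩, hpq, Nat.lt_add_one a⟩ (Or.inl ⟨trivial, trivial⟩)
  · constructor
    · rintro ⟨⟨hr, hs⟩, hlt, hinv⟩
      rw [hmap r hr, hmap s hs, hcmp r s hr hs hlt hrs] at hinv
      exact Or.inr ⟨⟨hr, hs⟩, hlt, hinv⟩
    · rintro (hpq' | ⟨⟨hr, hs⟩, hlt, hinv⟩)
      · exact absurd hpq' hrs
      · rw [hmap r hr, hmap s hs, hcmp r s hr hs hlt hrs]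
        exact ⟨⟨hr, hs⟩, hlt, hinv⟩

lemma readingWord_comp (α : List ℕ) (f : ℕ → ℕ) (T : Filling) :
    readingWord α (f ∘ T) = (readingWord α T).map f := by
  simp [readingWord, List.map_flatMap, Function.comp_def]

lemma swapEntries_eq_comp (i : ℕ) (T : Filling) : swapEntries i T = Equiv.swap i (i + 1) ∘ T := by
  ext c
  simp only [swapEntries, Function.comp_apply, Equiv.swap_apply_def]

lemma readingWord_swapEntries (α : List ℕ) (i : ℕ) (T : Filling) :
    readingWord α (swapEntries i T) = (readingWord α T).map (Equiv.swap i (i + 1)) := by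
  rw [swapEntries_eq_comp, readingWord_comp]

lemma IsStdFilling.readingWord_nodup {α : List ℕ} {T : Filling} (hT : IsStdFilling α T) :
    (readingWord α T).Nodup := by
  have hinj := hT.2.2.1
  refine List.nodup_flatMap.mpr ⟨fun r hr => ?_, ?_⟩
  · have hr' : r < α.length := by simpa using hr
    refine List.nodup_reverse.mpr (List.nodup_range.map_on fun j hj j' hj' hjj' => ?_)
    exact congrArg Prod.snd
      (hinj (r, j) (r, j') ⟨hr', by simpa using hj⟩ ⟨hr', by simpa using hj'⟩ hjj')
  · refine (List.nodup_reverse.mpr List.nodup_range).imp_of_mem fun {r s} hr hs hrs => ?_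
    simp only [List.mem_reverse, List.mem_range] at hr hs
    refine List.disjoint_left.mpr fun {x} hx hx' => ?_
    simp only [List.mem_reverse, List.mem_map, List.mem_range] at hx hx'
    obtain ⟨j, hj, rfl⟩ := hx
    obtain ⟨j', hj', hjj'⟩ := hx'
    exact hrs (congrArg Prod.fst (hinj (s, j') (r, j) ⟨hs, hj'⟩ ⟨hr, hj⟩ hjj')).symm

lemma pair_sublist_range {a b L : ℕ} (hab : a < b) (hb : b < L) : [a, b].Sublist (List.range L) := by
  obtain ⟨k, rfl⟩ := Nat.exists_eq_add_of_le hb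
  rw [List.range_add, List.range_succ]
  exact ((List.singleton_sublist.mpr (List.mem_range.mpr hab)).append (List.Sublist.refl [b])).trans
    (List.sublist_append_left _ _)

/-- Rows are read from top to bottom, so an entry in a higher row is read first. -/
lemma pair_sublist_readingWord {α : List ℕ} (T : Filling) {c c' : ℕ × ℕ}
    (hc : IsCell α c) (hc' : IsCell α c') (hrow : c'.1 < c.1) :
    [T c, T c'].Sublist (readingWord α T) := by
  have hrows : [c.1, c'.1].Sublist (List.range α.length).reverse :=
    List.reverse_sublist.mpr (pair_sublist_range hrow hc.1)
  refine List.Sublist.trans ?_ (hrows.flatMap _)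
  simp only [List.flatMap_cons, List.flatMap_nil, List.append_nil]
  refine (List.singleton_sublist.mpr ?_).append (List.singleton_sublist.mpr ?_) <;>
    simpa using ⟨_, ‹IsCell α _›.2, rfl⟩

lemma not_succAbove_and_swapEntries_eq_of_piRS_eq_some {α : List ℕ} {i : ℕ} {T T' : Filling}
    (h : piRS α i (some T) = some T') (hne : T ≠ T') :
    ¬SuccAbove α T i ∧ ¬SuccSameRow α T i ∧ swapEntries i T = T' := by
  simp only [piRS] at h
  split_ifs at h with hA hS
  · exact absurd (Option.some.inj h) hne
  · exact ⟨hA, hS, Option.some.inj h⟩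

lemma IsStdFilling.succBelow {α : List ℕ} {T : Filling} (hT : IsStdFilling α T) {i : ℕ}
    (hi : 1 ≤ i) (hi' : i + 1 ≤ α.sum) (hA : ¬SuccAbove α T i) (hS : ¬SuccSameRow α T i) :
    SuccBelow α T i := by
  obtain ⟨c, hc, hci⟩ := hT.2.2.2 i hi (by omega)
  obtain ⟨c', hc', hci'⟩ := hT.2.2.2 (i + 1) (by omega) hi'
  refine ⟨c, c', hc, hc', hci, hci', ?_⟩
  rcases Nat.lt_trichotomy c.1 c'.1 with hlt | heq | hgt
  · exact absurd ⟨c, c', hc, hc', hci, hci', hlt⟩ hA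
  · exact absurd ⟨c, c', hc, hc', hci, hci', heq⟩ hS
  · exact hgt

theorem piRS_inversions_succ_general (n : ℕ) (α : List ℕ) (hα : IsComposition α n)
    (T₁ T₂ : Filling) (hT₁ : IsSIT α T₁)
    (i : ℕ) (hi1 : 1 ≤ i) (hi2 : i ≤ n - 1)
    (h : piRS α i (some T₁) = some T₂) (hne : T₁ ≠ T₂) :
    inversions (readingWord α T₂) = inversions (readingWord α T₁) + 1 := by
  obtain ⟨hA, hS, rfl⟩ := not_succAbove_and_swapEntries_eq_of_piRS_eq_some h hne
  obtain ⟨c, c', hc, hc', hci, hci', hrow⟩ :=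
    hT₁.1.succBelow hi1 (by rw [hα.2]; omega) hA hS
  rw [readingWord_swapEntries]
  refine inversions_map_swap_succ hT₁.1.readingWord_nodup ?_
  simpa only [hci, hci'] using pair_sublist_readingWord T₁ hc hc' hrow

theorem piRS_inversions_succ (n : ℕ) (α : List ℕ) (hα : IsComposition α n)
    (T₁ T₂ : Filling) (hT₁ : IsSIT α T₁) (hT₂ : IsSIT α T₂)
    (i : ℕ) (hi1 : 1 ≤ i) (hi2 : i ≤ n - 1)
    (h : piRS α i (some T₁) = some T₂) (hne : T₁ ≠ T₂) :
    inversions (readingWord α T₂) = inversions (readingWord α T₁) + 1 :=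
  piRS_inversions_succ_general n α hα T₁ T₂ hT₁ i hi1 hi2 h hne

end ImmHecke
end

section
/- Let α be a composition of n, S, T ∈ SIT(α), and 1 ≤ i ≤ n−1. Then π_i^{S*}(T) = S with S ≠ T if and only if π_i^{RS*}(S) = T with T ≠ S. Consequently the cover relations of the dual immaculate partial order and of the row-strict dual immaculate partial order on SIT(α) coincide, so the two posets are isomorphic. -/
open Classical

namespace ImmHecke

/-- The cover relation of the dual immaculate partial order:
`S ⋖ T` iff some `π_i^{S*}` sends `T` to `S` (nontrivially). -/
def coverS (α : List ℕ) (S T : Filling) : Prop :=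
  ∃ i, 1 ≤ i ∧ i ≤ α.sum - 1 ∧ piS α i (some T) = some S ∧ S ≠ T

/-- The cover relation of the row-strict dual immaculate partial order:
`S ⋖ T` iff some `π_i^{RS*}` sends `S` to `T` (nontrivially). -/
def coverRS (α : List ℕ) (S T : Filling) : Prop :=
  ∃ i, 1 ≤ i ∧ i ≤ α.sum - 1 ∧ piRS α i (some S) = some T ∧ T ≠ S

lemma swap_swap (i : ℕ) (T : Filling) : swapEntries i (swapEntries i T) = T := by
  funext c
  simp only [swapEntries]
  split_ifs <;> omega

lemma swap_val_i {i : ℕ} {T : Filling} {c : ℕ × ℕ} (h : T c = i) :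
    swapEntries i T c = i + 1 := by simp [swapEntries, h]

lemma swap_val_succ {i : ℕ} {T : Filling} {c : ℕ × ℕ} (h : T c = i + 1) :
    swapEntries i T c = i := by
  simp only [swapEntries, h]
  split_ifs <;> omega

/-- Key lemma, direction `piS → piRS`. -/
lemma key_forward {α : List ℕ} {S T : Filling} {i : ℕ} (n : ℕ) (hα : IsComposition α n)
    (hS : IsSIT α S) (hT : IsSIT α T) (h1 : 1 ≤ i) (h2 : i ≤ n - 1)
    (hpS : piS α i (some T) = some S) (hne : S ≠ T) :
    piRS α i (some S) = some T := by
  have hred : piS α i (some T)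
      = if SuccSameRow α T i ∨ SuccBelow α T i then some T
        else if BothFirstColumn α T i then none
        else some (swapEntries i T) := rfl
  rw [hred] at hpS
  split_ifs at hpS with hA hB
  · exact absurd (Option.some.inj hpS) (Ne.symm hne)
  -- now hpS : some (swapEntries i T) = some S
  have hswap : swapEntries i T = S := Option.some.inj hpS
  -- get cells of i and i+1 in T
  have hsum : α.sum = n := hα.2
  obtain ⟨c, hc, hvc⟩ := hT.1.2.2.2 i h1 (by omega : i ≤ α.sum)
  obtain ⟨c', hc', hvc'⟩ := hT.1.2.2.2 (i + 1) (by omega) (by omega : i + 1 ≤ α.sum)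
  -- i+1 is strictly above i in T
  have hAb : c.1 < c'.1 := by
    rcases Nat.lt_trichotomy c.1 c'.1 with h | h | h
    · exact h
    · exact absurd (Or.inl ⟨c, c', hc, hc', hvc, hvc', h⟩) hA
    · exact absurd (Or.inr ⟨c, c', hc, hc', hvc, hvc', h⟩) hA
  have hSc : S c = i + 1 := by rw [← hswap]; exact swap_val_i hvc
  have hSc' : S c' = i := by rw [← hswap]; exact swap_val_succ hvc'
  have hinj := hS.1.2.2.1
  have hred' : piRS α i (some S)
      = if SuccAbove α S i then some S
        else if SuccSameRow α S i then none
        else some (swapEntries i S) := rfl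
  rw [hred']
  have hnab : ¬ SuccAbove α S i := by
    rintro ⟨d, d', hd, hd', hvd, hvd', hlt⟩
    have e1 : d = c' := hinj d c' hd hc' (by rw [hvd, hSc'])
    have e2 : d' = c := hinj d' c hd' hc (by rw [hvd', hSc])
    rw [e1, e2] at hlt; omega
  have hnsr : ¬ SuccSameRow α S i := by
    rintro ⟨d, d', hd, hd', hvd, hvd', heq⟩
    have e1 : d = c' := hinj d c' hd hc' (by rw [hvd, hSc'])
    have e2 : d' = c := hinj d' c hd' hc (by rw [hvd', hSc])
    rw [e1, e2] at heq; omega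
  rw [if_neg hnab, if_neg hnsr, ← hswap, swap_swap]

/-- Key lemma, direction `piRS → piS`. -/
lemma key_backward {α : List ℕ} {S T : Filling} {i : ℕ} (n : ℕ) (hα : IsComposition α n)
    (hS : IsSIT α S) (hT : IsSIT α T) (h1 : 1 ≤ i) (h2 : i ≤ n - 1)
    (hpRS : piRS α i (some S) = some T) (hne : T ≠ S) :
    piS α i (some T) = some S := by
  have hred : piRS α i (some S)
      = if SuccAbove α S i then some S
        else if SuccSameRow α S i then none
        else some (swapEntries i S) := rfl
  rw [hred] at hpRS
  split_ifs at hpRS with hA hB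
  · exact absurd (Option.some.inj hpRS) (Ne.symm hne)
  have hswap : swapEntries i S = T := Option.some.inj hpRS
  have hsum : α.sum = n := hα.2
  obtain ⟨c, hc, hvc⟩ := hS.1.2.2.2 i h1 (by omega : i ≤ α.sum)
  obtain ⟨c', hc', hvc'⟩ := hS.1.2.2.2 (i + 1) (by omega) (by omega : i + 1 ≤ α.sum)
  -- i+1 is strictly below i in S
  have hBl : c'.1 < c.1 := by
    rcases Nat.lt_trichotomy c.1 c'.1 with h | h | h
    · exact absurd ⟨c, c', hc, hc', hvc, hvc', h⟩ hA
    · exact absurd ⟨c, c', hc, hc', hvc, hvc', h⟩ hB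
    · exact h
  have hTc : T c = i + 1 := by rw [← hswap]; exact swap_val_i hvc
  have hTc' : T c' = i := by rw [← hswap]; exact swap_val_succ hvc'
  have hinj := hT.1.2.2.1
  have hred' : piS α i (some T)
      = if SuccSameRow α T i ∨ SuccBelow α T i then some T
        else if BothFirstColumn α T i then none
        else some (swapEntries i T) := rfl
  rw [hred']
  have hnsb : ¬ (SuccSameRow α T i ∨ SuccBelow α T i) := by
    rintro (⟨d, d', hd, hd', hvd, hvd', h⟩ | ⟨d, d', hd, hd', hvd, hvd', h⟩) <;>
    · have e1 : d = c' := hinj d c' hd hc' (by rw [hvd, hTc'])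
      have e2 : d' = c := hinj d' c hd' hc (by rw [hvd', hTc])
      rw [e1, e2] at h; omega
  have hnfc : ¬ BothFirstColumn α T i := by
    rintro ⟨d, d', hd, hd', hvd, hvd', hd0, hd'0⟩
    have e1 : d = c' := hinj d c' hd hc' (by rw [hvd, hTc'])
    have e2 : d' = c := hinj d' c hd' hc (by rw [hvd', hTc])
    have hc'0 : c'.2 = 0 := by rw [← e1]; exact hd0
    have hc0 : c.2 = 0 := by rw [← e2]; exact hd'0
    have ec : c = (c.1, 0) := by
      ext
      · rfl
      · exact hc0
    have ec' : c' = (c'.1, 0) := by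
      ext
      · rfl
      · exact hc'0
    have := hS.2.1 c'.1 c.1 (ec' ▸ hc') (ec ▸ hc) hBl
    rw [← ec', ← ec, hvc, hvc'] at this
    omega
  rw [if_neg hnsb, if_neg hnfc, ← hswap, swap_swap]

theorem piS_piRS_duality (n : ℕ) (α : List ℕ) (hα : IsComposition α n) :
    (∀ S T : Filling, IsSIT α S → IsSIT α T → ∀ i, 1 ≤ i → i ≤ n - 1 →
      ((piS α i (some T) = some S ∧ S ≠ T) ↔ (piRS α i (some S) = some T ∧ T ≠ S))) ∧
    (∀ S T : Filling, IsSIT α S → IsSIT α T → (coverS α S T ↔ coverRS α S T)) := by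
  have main : ∀ S T : Filling, IsSIT α S → IsSIT α T → ∀ i, 1 ≤ i → i ≤ n - 1 →
      ((piS α i (some T) = some S ∧ S ≠ T) ↔ (piRS α i (some S) = some T ∧ T ≠ S)) := by
    intro S T hS hT i h1 h2
    constructor
    · rintro ⟨h, hne⟩
      exact ⟨key_forward n hα hS hT h1 h2 h hne, hne.symm⟩
    · rintro ⟨h, hne⟩
      exact ⟨key_backward n hα hS hT h1 h2 h hne, hne.symm⟩
  refine ⟨main, ?_⟩
  intro S T hS hT
  have hsum : α.sum = n := hα.2
  constructor
  · rintro ⟨i, hi1, hi2, h, hne⟩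
    exact ⟨i, hi1, hi2, ((main S T hS hT i hi1 (hsum ▸ hi2)).mp ⟨h, hne⟩)⟩
  · rintro ⟨i, hi1, hi2, h, hne⟩
    exact ⟨i, hi1, hi2, ((main S T hS hT i hi1 (hsum ▸ hi2)).mpr ⟨h, hne⟩)⟩

end ImmHecke
end

section
/- Let α be a composition of n and let f : V_α → V_α be a ℚ-linear map with f ∘ f = f and f ∘ π_i^{RS*} = π_i^{RS*} ∘ f for all 1 ≤ i ≤ n−1. Writing f(S^0_α) = Σ_{T ∈ SIT(α)} a_T T, one has a_T = 0 whenever T ∉ SIT*(α); that is, f(S^0_α) lies in the linear span of SIT*(α). -/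
open Classical

namespace ImmHecke

/-! ### Auxiliary lemmas -/

lemma length_le_sum' {α : List ℕ} (h : ∀ a ∈ α, 0 < a) : α.length ≤ α.sum := by
  induction α with
  | nil => simp
  | cons a l ih =>
    have h1 := h a (by simp)
    have h2 := ih (fun b hb => h b (by simp [hb]))
    simp only [List.length_cons, List.sum_cons]
    omega

lemma isCell_first_col {α : List ℕ} (hpos : ∀ a ∈ α, 0 < a) {r : ℕ}
    (hr : r < α.length) : IsCell α (r, 0) := by
  refine ⟨hr, ?_⟩
  have : α.getD r 0 = α[r] := List.getD_eq_getElem α 0 hr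
  rw [this]
  exact hpos _ (List.getElem_mem hr)

lemma S0_first_col {α : List ℕ} (hpos : ∀ a ∈ α, 0 < a) {r : ℕ}
    (hr : r < α.length) : S0 α (r, 0) = r + 1 := by
  unfold S0
  rw [if_pos (isCell_first_col hpos hr)]
  simp

lemma succAbove_S0 {α : List ℕ} (hpos : ∀ a ∈ α, 0 < a) {i : ℕ}
    (h1 : 1 ≤ i) (h2 : i < α.length) : SuccAbove α (S0 α) i := by
  refine ⟨(i - 1, 0), (i, 0), isCell_first_col hpos (by omega),
    isCell_first_col hpos h2, ?_, ?_, ?_⟩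
  · rw [S0_first_col hpos (by omega)]; omega
  · rw [S0_first_col hpos h2]
  · show i - 1 < i; omega

lemma piRS_some (α : List ℕ) (i : ℕ) (T : Filling) : piRS α i (some T) =
    if SuccAbove α T i then some T
    else if SuccSameRow α T i then none
    else some (swapEntries i T) := rfl

lemma piTargetRS_none {α : List ℕ} {i : ℕ} {T : {T : Filling // IsSIT α T}}
    (h : piRS α i (some T.val) = none) : piTargetRS α i T = 0 := by
  unfold piTargetRS
  rw [h]

lemma piTargetRS_some {α : List ℕ} {i : ℕ} {T : {T : Filling // IsSIT α T}} {T'' : Filling}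
    (h : piRS α i (some T.val) = some T'') :
    piTargetRS α i T = if hs : IsSIT α T'' then Finsupp.single ⟨T'', hs⟩ 1 else 0 := by
  unfold piTargetRS
  rw [h]

lemma piRSLin_single (α : List ℕ) (i : ℕ) (T : {T : Filling // IsSIT α T}) :
    piRSLin α i (Finsupp.single T 1) = piTargetRS α i T := by
  unfold piRSLin
  rw [Finsupp.lsum_single]
  simp [LinearMap.toSpanSingleton_apply]

lemma piRSLin_fixes_S0 (α : List ℕ) (i : ℕ) (hS0 : IsSIT α (S0 α))
    (hab : SuccAbove α (S0 α) i) :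
    piRSLin α i (Finsupp.single ⟨S0 α, hS0⟩ 1) = Finsupp.single ⟨S0 α, hS0⟩ 1 := by
  rw [piRSLin_single]
  rw [piTargetRS_some (T := ⟨S0 α, hS0⟩) (by rw [piRS_some, if_pos hab])]
  rw [dif_pos hS0]

lemma succAbove_swap {α : List ℕ} {T : Filling} {i : ℕ} (hT : IsSIT α T)
    (h1 : 1 ≤ i) (h2 : i + 1 ≤ α.sum)
    (hab : ¬ SuccAbove α T i) (hsr : ¬ SuccSameRow α T i) :
    SuccAbove α (swapEntries i T) i := by
  obtain ⟨c, hc, hci⟩ := hT.1.2.2.2 i h1 (by omega)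
  obtain ⟨c', hc', hci'⟩ := hT.1.2.2.2 (i + 1) (by omega) h2
  have hne : ¬ c.1 < c'.1 := fun h => hab ⟨c, c', hc, hc', hci, hci', h⟩
  have heq : ¬ c.1 = c'.1 := fun h => hsr ⟨c, c', hc, hc', hci, hci', h⟩
  refine ⟨c', c, hc', hc, ?_, ?_, by omega⟩
  · unfold swapEntries
    rw [if_neg (by rw [hci']; omega), if_pos hci']
  · unfold swapEntries
    rw [if_pos hci]

lemma piTargetRS_apply_zero {α : List ℕ} {i : ℕ} (h1 : 1 ≤ i) (h2 : i + 1 ≤ α.sum)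
    (T' T₀ : {T : Filling // IsSIT α T}) (hT₀ : ¬ SuccAbove α T₀.val i) :
    piTargetRS α i T' T₀ = 0 := by
  by_cases hab : SuccAbove α T'.val i
  · rw [piTargetRS_some (by rw [piRS_some, if_pos hab]), dif_pos T'.2,
      Finsupp.single_apply, if_neg]
    intro he
    apply hT₀
    have hv : T'.val = T₀.val := congrArg Subtype.val he
    rw [← hv]
    exact hab
  · by_cases hsr : SuccSameRow α T'.val i
    · rw [piTargetRS_none (by rw [piRS_some, if_neg hab, if_pos hsr])]
      rfl
    · rw [piTargetRS_some (by rw [piRS_some, if_neg hab, if_neg hsr])]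
      by_cases hS : IsSIT α (swapEntries i T'.val)
      · rw [dif_pos hS, Finsupp.single_apply, if_neg]
        intro he
        apply hT₀
        have hv : swapEntries i T'.val = T₀.val := congrArg Subtype.val he
        rw [← hv]
        exact succAbove_swap T'.2 h1 h2 hab hsr
      · rw [dif_neg hS]
        rfl

lemma apply_piRSLin_eq_zero {α : List ℕ} {i : ℕ} (h1 : 1 ≤ i) (h2 : i + 1 ≤ α.sum)
    (v : {T : Filling // IsSIT α T} →₀ ℚ) (T₀ : {T : Filling // IsSIT α T})
    (hT₀ : ¬ SuccAbove α T₀.val i) :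
    (piRSLin α i v) T₀ = 0 := by
  unfold piRSLin
  rw [Finsupp.lsum_apply, Finsupp.sum_apply]
  apply Finset.sum_eq_zero
  intro T' _
  simp only [LinearMap.toSpanSingleton_apply, Finsupp.smul_apply,
    piTargetRS_apply_zero h1 h2 T' T₀ hT₀, smul_zero]

lemma first_col_eq {α : List ℕ} {T : Filling} (hpos : ∀ a ∈ α, 0 < a)
    (hT : IsSIT α T)
    (hab : ∀ i, 1 ≤ i → i < α.length → SuccAbove α T i) :
    ∀ m, m < α.length → T (m, 0) = m + 1 := by
  obtain ⟨⟨hzero, hbound, hinj, hsurj⟩, hcol, hrow⟩ := hT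
  intro m
  induction m with
  | zero =>
    intro h0
    have hsum : 1 ≤ α.sum := le_trans h0 (length_le_sum' hpos)
    obtain ⟨c, hc, hc1⟩ := hsurj 1 le_rfl hsum
    have hcell : IsCell α (c.1, 0) := isCell_first_col hpos hc.1
    have hle : T (c.1, 0) ≤ T c := by
      rcases Nat.eq_zero_or_pos c.2 with h | h
      · have : (c.1, (0 : ℕ)) = c := by
          rw [← h]
        rw [this]
      · exact le_of_lt (hrow c.1 0 c.2 hcell hc h)
    have hge := (hbound _ hcell).1
    have hT1 : T (c.1, 0) = 1 := by omega
    have hc10 : c.1 = 0 := by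
      by_contra hne
      have hcell0 : IsCell α (0, 0) := isCell_first_col hpos (by omega)
      have := hcol 0 c.1 hcell0 hcell (by omega)
      have := (hbound _ hcell0).1
      omega
    rw [hc10] at hT1
    simpa using hT1
  | succ m ih =>
    intro hm1
    have hTm : T (m, 0) = m + 1 := ih (by omega)
    obtain ⟨c, c', hc, hc', hv, hv', hlt⟩ := hab (m + 1) (by omega) hm1
    have hcm : c = (m, 0) :=
      hinj c (m, 0) hc (isCell_first_col hpos (by omega)) (by rw [hv, hTm])
    have hr : m < c'.1 := by rw [hcm] at hlt; exact hlt
    have hrcell : IsCell α (c'.1, 0) := isCell_first_col hpos hc'.1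
    have h1 : T (c'.1, 0) ≤ T c' := by
      rcases Nat.eq_zero_or_pos c'.2 with h | h
      · have : (c'.1, (0 : ℕ)) = c' := by rw [← h]
        rw [this]
      · exact le_of_lt (hrow c'.1 0 c'.2 hrcell hc' h)
    have h2 : T (m, 0) < T (c'.1, 0) :=
      hcol m c'.1 (isCell_first_col hpos (by omega)) hrcell hr
    have h3 : T (c'.1, 0) = m + 2 := by rw [hTm] at h2; rw [hv'] at h1; omega
    by_cases hre : c'.1 = m + 1
    · rw [hre] at h3
      exact h3
    · exfalso
      have hcell' : IsCell α (m + 1, 0) := isCell_first_col hpos (by omega)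
      have ha : T (m, 0) < T (m + 1, 0) :=
        hcol m (m + 1) (isCell_first_col hpos (by omega)) hcell' (by omega)
      have hb : T (m + 1, 0) < T (c'.1, 0) := hcol (m + 1) c'.1 hcell' hrcell (by omega)
      omega

lemma sitstar_of_succAbove {α : List ℕ} {T : Filling} (hpos : ∀ a ∈ α, 0 < a)
    (hT : IsSIT α T)
    (hab : ∀ i, 1 ≤ i → i < α.length → SuccAbove α T i) : IsSITstar α T := by
  have key := first_col_eq hpos hT hab
  refine ⟨hT, ?_, ?_⟩
  · intro i hi
    have := hi.1
    rw [key i hi.1]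
    omega
  · intro m hm1 hm2
    exact ⟨m - 1, isCell_first_col hpos (by omega),
      by rw [key (m - 1) (by omega)]; omega⟩

theorem idempotent_image_of_S0_in_SITstar (n : ℕ) (α : List ℕ) (hα : IsComposition α n)
    (hS0 : IsSIT α (S0 α))
    (f : ({T : Filling // IsSIT α T} →₀ ℚ) →ₗ[ℚ] ({T : Filling // IsSIT α T} →₀ ℚ))
    (hidem : f ∘ₗ f = f)
    (hcomm : ∀ i, 1 ≤ i → i ≤ n - 1 → f ∘ₗ piRSLin α i = piRSLin α i ∘ₗ f) :
    ∀ T : {T : Filling // IsSIT α T}, ¬ IsSITstar α T.val →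
      f (Finsupp.single ⟨S0 α, hS0⟩ 1) T = 0 := by
  intro T hTstar
  by_contra hne
  apply hTstar
  apply sitstar_of_succAbove hα.1 T.2
  intro i hi1 hi2
  by_contra hab
  apply hne
  have hlen : α.length ≤ α.sum := length_le_sum' hα.1
  have hisum : i + 1 ≤ α.sum := by omega
  have hfix : piRSLin α i (f (Finsupp.single ⟨S0 α, hS0⟩ 1))
      = f (Finsupp.single ⟨S0 α, hS0⟩ 1) := by
    have hn : α.sum = n := hα.2
    have hc := hcomm i hi1 (by omega)
    have hthis := congrArg (fun g => g (Finsupp.single ⟨S0 α, hS0⟩ 1)) hc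
    simp only [LinearMap.comp_apply] at hthis
    rw [piRSLin_fixes_S0 α i hS0 (succAbove_S0 hα.1 hi1 hi2)] at hthis
    exact hthis.symm
  rw [← hfix]
  exact apply_piRSLin_eq_zero hi1 hisum _ T hab

end ImmHecke
end
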